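/- arXiv:1302.7141 — 6 statements merged into one kernel-verified Lean document; each statement's English description precedes it below -/
import Mathlib

section
/- Let ν > 0 and δ ≥ 0, and let G be a bipartite graph with |L(G)| = m. Let ℒ be the set of maximal stable sets A of G with |A ∩ L(G)| ≥ (1/2 + δ)·m, and let 𝒮 be the set of maximal stable sets B with |B ∩ L(G)| ≤ (1 − ν)·m/2. If |𝒮| ≥ (1/ν)·|ℒ|, then the sum over all maximal stable sets A of |A ∩ L(G)|, divided by the total number of maximal stable sets, is at most (1/2 + δ)·m. -/
open Finset
open scoped Classical

variable {V : Type*}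

/-- `S` is a maximal stable (independent) set of `G`: no two vertices of `S` are adjacent and
every vertex outside `S` has a neighbour in `S`. -/
def IsMaxStable [Fintype V] [DecidableEq V] (G : SimpleGraph V) (S : Finset V) : Prop :=
  (∀ u ∈ S, ∀ v ∈ S, ¬ G.Adj u v) ∧ ∀ v, v ∉ S → ∃ u ∈ S, G.Adj v u

/-- The collection 𝒜(G) of maximal stable sets of `G`. -/
noncomputable def mstab [Fintype V] [DecidableEq V] (G : SimpleGraph V) : Finset (Finset V) :=
  Finset.univ.filter (fun S => IsMaxStable G S)

/-- `(L, R)` is a bipartition of `G`. -/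
def IsBip [DecidableEq V] (G : SimpleGraph V) (L R : Finset V) : Prop :=
  Disjoint L R ∧ (∀ x : V, x ∈ L ∪ R) ∧
    ∀ ⦃u v⦄, G.Adj u v → (u ∈ L ∧ v ∈ R) ∨ (u ∈ R ∧ v ∈ L)

/-! Averaging: a value of `A ↦ |A ∩ L|` at least `t = (1/2 + δ) m` exceeds `t` by at most
`m - t ≤ m/2`, while a value at most `(1 - ν) m / 2` falls short of `t` by at least `ν m / 2`.
There are at least `1/ν` times as many values of the second kind, so the total deficit
outweighs the total excess. -/

section Balancing

variable {ι : Type*} (s : Finset ι) (f : ι → ℝ) {M t u : ℝ}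

theorem sum_sub_le_card_high_sub_card_low (hf : ∀ i ∈ s, f i ≤ M) :
    ∑ i ∈ s, (f i - t) ≤
      (M - t) * #(s.filter (fun i => t ≤ f i)) - (t - u) * #(s.filter (fun i => f i ≤ u)) := by
  calc ∑ i ∈ s, (f i - t)
      ≤ ∑ i ∈ s, ((M - t) * (if t ≤ f i then 1 else 0) - (t - u) * (if f i ≤ u then 1 else 0)) :=
        sum_le_sum fun i hi => by
          have := hf i hi
          split_ifs <;> linarith
    _ = _ := by rw [sum_sub_distrib, ← mul_sum, ← mul_sum, sum_boole, sum_boole]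

theorem sum_div_card_le_of_card_high_le (ht : 0 ≤ t) (hf : ∀ i ∈ s, f i ≤ M)
    (h : (M - t) * #(s.filter (fun i => t ≤ f i)) ≤ (t - u) * #(s.filter (fun i => f i ≤ u))) :
    (∑ i ∈ s, f i) / #s ≤ t := by
  have hsum : ∑ i ∈ s, (f i - t) ≤ 0 :=
    (sum_sub_le_card_high_sub_card_low s f (u := u) hf).trans (sub_nonpos.mpr h)
  rw [sum_sub_distrib, sum_const, nsmul_eq_mul, sub_nonpos] at hsum
  exact div_le_of_le_mul₀ (Nat.cast_nonneg _) ht (by linarith)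

end Balancing

theorem stmt_1_general [Fintype V] [DecidableEq V] (G : SimpleGraph V) (L : Finset V)
    (ν δ : ℝ) (hν : 0 < ν) (hδ : 0 ≤ δ) (m : ℕ) (hm : L.card = m)
    (h : (1/ν) * (((mstab G).filter
          (fun A => (1/2 + δ) * (m : ℝ) ≤ ((A ∩ L).card : ℝ))).card : ℝ)
        ≤ (((mstab G).filter
          (fun B => ((B ∩ L).card : ℝ) ≤ (1 - ν) * (m : ℝ) / 2)).card : ℝ)) :
    (∑ A ∈ mstab G, ((A ∩ L).card : ℝ)) / ((mstab G).card : ℝ) ≤ (1/2 + δ) * m := by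
  set high := ((mstab G).filter (fun A => (1/2 + δ) * (m : ℝ) ≤ ((A ∩ L).card : ℝ))).card
  set low := ((mstab G).filter (fun B => ((B ∩ L).card : ℝ) ≤ (1 - ν) * (m : ℝ) / 2)).card
  have hm0 : (0 : ℝ) ≤ m := m.cast_nonneg
  have hhigh : (high : ℝ) ≤ ν * low := by rwa [one_div, inv_mul_le_iff₀ hν] at h
  refine sum_div_card_le_of_card_high_le _ _ (M := m) (u := (1 - ν) * m / 2) (by positivity)
    (fun A _ => ?_) ?_
  · exact_mod_cast hm ▸ card_le_card inter_subset_right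
  · calc (m - (1/2 + δ) * m) * high ≤ m / 2 * high := by
          gcongr; nlinarith [mul_nonneg hδ hm0]
      _ ≤ m / 2 * (ν * low) := by gcongr
      _ ≤ ((1/2 + δ) * m - (1 - ν) * m / 2) * low := by
          nlinarith [mul_nonneg (mul_nonneg hδ hm0) low.cast_nonneg]

theorem stmt_1 [Fintype V] [DecidableEq V] (G : SimpleGraph V) (L R : Finset V)
    (hbip : IsBip G L R) (ν δ : ℝ) (hν : 0 < ν) (hδ : 0 ≤ δ) (m : ℕ) (hm : L.card = m)
    (h : (1/ν) * (((mstab G).filter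
          (fun A => (1/2 + δ) * (m : ℝ) ≤ ((A ∩ L).card : ℝ))).card : ℝ)
        ≤ (((mstab G).filter
          (fun B => ((B ∩ L).card : ℝ) ≤ (1 - ν) * (m : ℝ) / 2)).card : ℝ)) :
    (∑ A ∈ mstab G, ((A ∩ L).card : ℝ)) / ((mstab G).card : ℝ) ≤ (1/2 + δ) * m :=
  stmt_1_general G L ν δ hν hδ m hm h
end

section
/- In a bipartite graph G with at least one edge, if a vertex v ∈ L(G) is adjacent to every vertex of R(G), then the only maximal stable set containing v is L(G) itself; moreover G has at least two maximal stable sets, so v lies in at most half of the maximal stable sets of G. -/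
open Finset
open scoped Classical

variable {V : Type*}

namespace IsBip

variable [DecidableEq V] {G : SimpleGraph V} {L R : Finset V}

theorem notMem_right (hbip : IsBip G L R) {x : V} (hx : x ∈ L) : x ∉ R :=
  Finset.disjoint_left.mp hbip.1 hx

theorem mem_left_of_notMem_right (hbip : IsBip G L R) {x : V} (hx : x ∉ R) : x ∈ L :=
  (Finset.mem_union.mp (hbip.2.1 x)).resolve_right hx

theorem mem_right_of_notMem_left (hbip : IsBip G L R) {x : V} (hx : x ∉ L) : x ∈ R :=
  (Finset.mem_union.mp (hbip.2.1 x)).resolve_left hx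

theorem not_adj_of_mem_left (hbip : IsBip G L R) {x y : V} (hx : x ∈ L) (hy : y ∈ L) :
    ¬ G.Adj x y := fun hxy => by
  rcases hbip.2.2 hxy with ⟨-, hyR⟩ | ⟨hxR, -⟩
  · exact hbip.notMem_right hy hyR
  · exact hbip.notMem_right hx hxR

variable [Fintype V]

theorem isMaxStable_left (hbip : IsBip G L R) (hR : ∀ w ∈ R, ∃ u, G.Adj w u) :
    IsMaxStable G L := by
  refine ⟨fun x hx y hy => hbip.not_adj_of_mem_left hx hy, fun w hw => ?_⟩
  obtain ⟨u, hwu⟩ := hR w (hbip.mem_right_of_notMem_left hw)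
  rcases hbip.2.2 hwu with ⟨hwL, -⟩ | ⟨-, huL⟩
  · exact absurd hwL hw
  · exact ⟨u, huL, hwu⟩

theorem isMaxStable_right_union_isolated (hbip : IsBip G L R) :
    IsMaxStable G (R ∪ L.filter fun u => ∀ x, ¬ G.Adj u x) := by
  constructor
  · intro a ha b hb hab
    rcases hbip.2.2 hab with ⟨haL, -⟩ | ⟨-, hbL⟩
    · rcases Finset.mem_union.mp ha with haR | haI
      · exact hbip.notMem_right haL haR
      · exact (Finset.mem_filter.mp haI).2 b hab
    · rcases Finset.mem_union.mp hb with hbR | hbI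
      · exact hbip.notMem_right hbL hbR
      · exact (Finset.mem_filter.mp hbI).2 a hab.symm
  · intro u hu
    have huR : u ∉ R := fun h => hu (Finset.mem_union_left _ h)
    have huL : u ∈ L := hbip.mem_left_of_notMem_right huR
    obtain ⟨x, hux⟩ : ∃ x, G.Adj u x := by
      by_contra! hiso
      exact hu (Finset.mem_union_right _ (Finset.mem_filter.mpr ⟨huL, hiso⟩))
    rcases hbip.2.2 hux with ⟨-, hxR⟩ | ⟨huR', -⟩
    · exact ⟨x, Finset.mem_union_left _ hxR, hux⟩
    · exact absurd huR' huR

theorem eq_left_of_mem_of_forall_adj (hbip : IsBip G L R) {S : Finset V}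
    (hS : IsMaxStable G S) {v : V} (hvS : v ∈ S) (hadj : ∀ w ∈ R, G.Adj v w) : S = L := by
  obtain ⟨hstab, hmax⟩ := hS
  have hSL : S ⊆ L := fun x hx =>
    hbip.mem_left_of_notMem_right fun hxR => hstab v hvS x hx (hadj x hxR)
  refine Finset.Subset.antisymm hSL fun x hxL => ?_
  by_contra hxS
  obtain ⟨u, huS, hxu⟩ := hmax x hxS
  exact hbip.not_adj_of_mem_left hxL (hSL huS) hxu

end IsBip

theorem stmt_2 [Fintype V] [DecidableEq V] (G : SimpleGraph V) (L R : Finset V)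
    (hbip : IsBip G L R) (hR : R.Nonempty) (v : V) (hv : v ∈ L)
    (hadj : ∀ w ∈ R, G.Adj v w) :
    (∀ S ∈ mstab G, v ∈ S → S = L) ∧ 2 ≤ (mstab G).card ∧
      2 * ((mstab G).filter (fun S => v ∈ S)).card ≤ (mstab G).card := by
  have hunique : ∀ S ∈ mstab G, v ∈ S → S = L := fun S hS hvS =>
    hbip.eq_left_of_mem_of_forall_adj (Finset.mem_filter.mp hS).2 hvS hadj
  have hL : L ∈ mstab G := Finset.mem_filter.mpr ⟨Finset.mem_univ _,
    hbip.isMaxStable_left fun w hw => ⟨v, (hadj w hw).symm⟩⟩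
  set S₀ := R ∪ L.filter fun u => ∀ x, ¬ G.Adj u x
  have hS₀ : S₀ ∈ mstab G :=
    Finset.mem_filter.mpr ⟨Finset.mem_univ _, hbip.isMaxStable_right_union_isolated⟩
  have hvS₀ : v ∉ S₀ := by
    obtain ⟨w, hw⟩ := hR
    simp only [S₀, Finset.mem_union, Finset.mem_filter, not_or, not_and, not_forall, not_not]
    exact ⟨hbip.notMem_right hv, fun _ => ⟨w, hadj w hw⟩⟩
  have htwo : 2 ≤ (mstab G).card :=
    Finset.one_lt_card.mpr ⟨L, hL, S₀, hS₀, fun h => hvS₀ (h ▸ hv)⟩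
  have hsingle : (mstab G).filter (fun S => v ∈ S) = {L} := by
    ext S
    simp only [Finset.mem_filter, Finset.mem_singleton]
    exact ⟨fun ⟨hS, hvS⟩ => hunique S hS hvS, fun h => h ▸ ⟨hL, hv⟩⟩
  refine ⟨hunique, htwo, ?_⟩
  rw [hsingle, Finset.card_singleton]
  omega
end

section
/- Let G ∈ ℬ(m,n;p) be a random bipartite graph with edge probability p ∈ (0,1), q = 1 − p. Let S ⊆ V(G) with |S ∩ L(G)| = ℓ and |S ∩ R(G)| = r. Then the probability that S is a maximal stable set of G equals q^{ℓr} · (1 − q^r)^{m−ℓ} · (1 − q^ℓ)^{n−r}. -/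
open Finset
open scoped Classical

/-- Weight (probability) of an outcome `g` of the random bipartite graph `ℬ(m,n;p)` with left
side `Fin m` and right side `Fin n`: each potential edge is present independently with
probability `p`. -/
noncomputable def bipWeight (m n : ℕ) (p : ℝ) (g : Fin m × Fin n → Bool) : ℝ :=
  ∏ e : Fin m × Fin n, if g e then p else 1 - p

/-- Probability of an event `E` in the random bipartite graph `ℬ(m,n;p)`. -/
noncomputable def bipProb (m n : ℕ) (p : ℝ) (E : (Fin m × Fin n → Bool) → Prop) : ℝ :=
  ∑ g : Fin m × Fin n → Bool, if E g then bipWeight m n p g else 0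

/-- The vertex set `A ∪ B` is a maximal stable set of the bipartite graph with edge
indicator `g`: there is no edge between `A` and `B`, every left vertex outside `A` has a
neighbour in `B`, and every right vertex outside `B` has a neighbour in `A`. -/
def IsMaxStableEvent {m n : ℕ} (A : Finset (Fin m)) (B : Finset (Fin n))
    (g : Fin m × Fin n → Bool) : Prop :=
  (∀ a ∈ A, ∀ b ∈ B, ¬ g (a, b) = true) ∧
  (∀ a, a ∉ A → ∃ b ∈ B, g (a, b) = true) ∧
  (∀ b, b ∉ B → ∃ a ∈ A, g (a, b) = true)

/-!
The three conditions defining a maximal stable set `A ∪ B` concern pairwise disjoint sets of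
potential edges: there is no edge in `A × B` (probability `q ^ (ℓ * r)`); each of the `m - ℓ`
left vertices outside `A` has one of its `r` possible edges into `B` (probability `1 - q ^ r`
each); each of the `n - r` right vertices outside `B` has one of its `ℓ` possible edges from `A`
(probability `1 - q ^ ℓ` each). Events depending on disjoint sets of independent coordinates
are independent, so the probability is the product.
-/

noncomputable def bernoulliWeight {ι : Type*} [Fintype ι] (p : ℝ) (g : ι → Bool) : ℝ :=
  ∏ i, if g i then p else 1 - p

noncomputable def bernoulliProb {ι : Type*} [Fintype ι] [DecidableEq ι] (p : ℝ)
    (E : (ι → Bool) → Prop) : ℝ :=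
  ∑ g : ι → Bool, if E g then bernoulliWeight p g else 0

theorem bipProb_eq_bernoulliProb (m n : ℕ) (p : ℝ) (E : (Fin m × Fin n → Bool) → Prop) :
    bipProb m n p E = bernoulliProb p E :=
  rfl

namespace bernoulliProb

variable {ι α β : Type*} [Fintype ι] [Fintype α] [Fintype β] [DecidableEq ι] [DecidableEq α]
  [DecidableEq β] (p : ℝ)

theorem congr {E F : (ι → Bool) → Prop} (h : ∀ g, E g ↔ F g) :
    bernoulliProb p E = bernoulliProb p F := by
  rw [funext fun g => propext (h g)]

theorem comp_equiv (e : α ≃ β) (E : (α → Bool) → Prop) :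
    bernoulliProb p (fun g : β → Bool => E (g ∘ e)) = bernoulliProb p E := by
  refine Fintype.sum_equiv (e.arrowCongr (Equiv.refl Bool)).symm _ _ fun g => ?_
  congr 1
  exact (e.prod_comp fun b => if g b then p else 1 - p).symm

theorem sum_and_eq_mul (P : (α → Bool) → Prop) (Q : (β → Bool) → Prop) :
    bernoulliProb p (fun g : α ⊕ β → Bool => P (g ∘ Sum.inl) ∧ Q (g ∘ Sum.inr))
      = bernoulliProb p P * bernoulliProb p Q := by
  unfold bernoulliProb
  calc _ = ∑ x : (α → Bool) × (β → Bool),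
        (if P x.1 then bernoulliWeight p x.1 else 0) * (if Q x.2 then bernoulliWeight p x.2 else 0) :=
      Fintype.sum_equiv (Equiv.sumArrowEquivProdArrow α β Bool) _ _ fun g => by
        rw [ite_zero_mul_ite_zero, bernoulliWeight, Fintype.prod_sum_type]
        congr
    _ = _ := by rw [Fintype.sum_prod_type, Finset.sum_mul_sum]

theorem forall_curry_eq_prod (P : α → (β → Bool) → Prop) :
    bernoulliProb p (fun g : α × β → Bool => ∀ a, P a (fun b => g (a, b)))
      = ∏ a, bernoulliProb p (P a) := by
  unfold bernoulliProb
  rw [Fintype.prod_sum]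
  refine Fintype.sum_equiv (Equiv.curry α β Bool) _ _ fun g => ?_
  rw [Fintype.prod_ite_zero, bernoulliWeight, Fintype.prod_prod_type]
  congr

theorem true_eq_one : bernoulliProb p (fun _ : ι → Bool => True) = 1 := by
  simp only [bernoulliProb, bernoulliWeight, if_true]
  calc _ = ∏ _ : ι, ∑ b : Bool, (if b then p else 1 - p) := (Fintype.prod_sum _).symm
    _ = 1 := by simp

theorem not_eq_one_sub (E : (ι → Bool) → Prop) :
    bernoulliProb p (fun g => ¬ E g) = 1 - bernoulliProb p E := by
  rw [← true_eq_one (ι := ι) p, eq_sub_iff_add_eq, bernoulliProb, bernoulliProb, bernoulliProb,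
    ← Finset.sum_add_distrib]
  refine Finset.sum_congr rfl fun g _ => ?_
  by_cases h : E g <;> simp [h]

theorem forall_eq_false :
    bernoulliProb p (fun g : ι → Bool => ∀ i, g i = false) = (1 - p) ^ Fintype.card ι := by
  simp [bernoulliProb, bernoulliWeight, ← funext_iff (g := fun _ => false)]

theorem exists_eq_true :
    bernoulliProb p (fun g : ι → Bool => ∃ i, g i = true) = 1 - (1 - p) ^ Fintype.card ι := by
  rw [← forall_eq_false (ι := ι), ← not_eq_one_sub p (fun g : ι → Bool => ∀ i, g i = false)]
  exact congr p fun g => by simp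

end bernoulliProb

section blockEquiv

variable {α β : Type*} [DecidableEq α] [DecidableEq β] (A : Finset α) (B : Finset β)

-- The block `A × Bᶜ` is indexed as `Bᶜ × A` so that it is a family of columns.
def blockEquiv :
    α × β ≃ ({a // a ∈ A} × {b // b ∈ B} ⊕ {a // a ∉ A} × {b // b ∈ B}) ⊕
      ({b // b ∉ B} × {a // a ∈ A} ⊕ {a // a ∉ A} × {b // b ∉ B}) :=
  ((Equiv.prodCongr (Equiv.sumCompl (· ∈ A)).symm (Equiv.sumCompl (· ∈ B)).symm).trans
    ((Equiv.prodSumDistrib _ _ _).trans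
      (Equiv.sumCongr (Equiv.sumProdDistrib _ _ _) (Equiv.sumProdDistrib _ _ _)))).trans
    (Equiv.sumCongr (Equiv.refl _) (Equiv.sumCongr (Equiv.prodComm _ _) (Equiv.refl _)))

@[simp]
theorem blockEquiv_symm_inl_inl (x : {a // a ∈ A} × {b // b ∈ B}) :
    (blockEquiv A B).symm (.inl (.inl x)) = (x.1.1, x.2.1) :=
  rfl

@[simp]
theorem blockEquiv_symm_inl_inr (x : {a // a ∉ A} × {b // b ∈ B}) :
    (blockEquiv A B).symm (.inl (.inr x)) = (x.1.1, x.2.1) :=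
  rfl

@[simp]
theorem blockEquiv_symm_inr_inl (x : {b // b ∉ B} × {a // a ∈ A}) :
    (blockEquiv A B).symm (.inr (.inl x)) = (x.2.1, x.1.1) :=
  rfl

end blockEquiv

theorem bipProb_isMaxStableEvent {m n : ℕ} (p : ℝ) (A : Finset (Fin m)) (B : Finset (Fin n)) :
    bipProb m n p (IsMaxStableEvent A B) =
      bernoulliProb p (fun h : {a // a ∈ A} × {b // b ∈ B} → Bool => ∀ x, h x = false) *
      bernoulliProb p (fun h : {a // a ∉ A} × {b // b ∈ B} → Bool => ∀ a, ∃ b, h (a, b) = true) *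
      bernoulliProb p (fun h : {b // b ∉ B} × {a // a ∈ A} → Bool => ∀ b, ∃ a, h (b, a) = true) := by
  rw [← mul_one (_ * _ * _), ← bernoulliProb.true_eq_one (ι := {a // a ∉ A} × {b // b ∉ B}) p,
    mul_assoc _ (bernoulliProb _ _), ← bernoulliProb.sum_and_eq_mul,
    ← bernoulliProb.sum_and_eq_mul, ← bernoulliProb.sum_and_eq_mul,
    ← bernoulliProb.comp_equiv p (blockEquiv A B).symm, bipProb_eq_bernoulliProb]
  refine bernoulliProb.congr p fun g => ?_
  simp [IsMaxStableEvent, Subtype.forall, Subtype.exists, and_assoc]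

theorem stmt_3_general (m n ℓ r : ℕ) (p q : ℝ) (hq : q = 1 - p)
    (A : Finset (Fin m)) (B : Finset (Fin n)) (hA : A.card = ℓ) (hB : B.card = r) :
    bipProb m n p (fun g => IsMaxStableEvent A B g)
      = q ^ (ℓ * r) * (1 - q ^ r) ^ (m - ℓ) * (1 - q ^ ℓ) ^ (n - r) := by
  rw [bipProb_isMaxStableEvent, bernoulliProb.forall_eq_false,
    bernoulliProb.forall_curry_eq_prod p (fun _ h => ∃ b, h b = true),
    bernoulliProb.forall_curry_eq_prod p (fun _ h => ∃ a, h a = true)]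
  simp only [bernoulliProb.exists_eq_true, Finset.prod_const, Finset.card_univ,
    Fintype.card_prod, Fintype.card_coe, Fintype.card_subtype_compl, Fintype.card_fin, hA, hB, hq]

theorem stmt_3 (m n ℓ r : ℕ) (p q : ℝ) (hp0 : 0 < p) (hp1 : p < 1) (hq : q = 1 - p)
    (A : Finset (Fin m)) (B : Finset (Fin n)) (hA : A.card = ℓ) (hB : B.card = r) :
    bipProb m n p (fun g => IsMaxStableEvent A B g)
      = q ^ (ℓ * r) * (1 - q ^ r) ^ (m - ℓ) * (1 - q ^ ℓ) ^ (n - r) :=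
  stmt_3_general m n ℓ r p q hq A B hA hB
end

section
/- Let 0 < q < 1, let m, n, ℓ*, r* be nonnegative integers with ℓ* ≤ m, r* ≤ n, and suppose n·q^{ℓ*} ≤ 1/2. Then the expected number of stable sets of a random bipartite graph G ∈ ℬ(m,n;p) (with q = 1−p) that have at least ℓ* vertices in L(G) and at least r* vertices in R(G) is at most 2^{m+1} · (n·q^{ℓ*})^{r*}. -/
open Finset
open scoped Classical

/-!
By linearity of expectation the expected count is the sum, over pairs `(A, B)` with
`|A| ≥ ℓ*` and `|B| ≥ r*`, of the probability `q ^ (|A| |B|) ≤ (q ^ ℓ*) ^ |B|` that no edge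
joins them. There are at most `2 ^ m` choices of `A`, and grouping the `B` by size gives
`∑_{k ≥ r*} C(n, k) q ^ (ℓ* k) ≤ ∑_{k ≥ r*} (n q ^ ℓ*) ^ k`, a geometric tail of ratio at most
`1/2`, hence at most `2 (n q ^ ℓ*) ^ r*`.
-/

theorem sum_ite_forall_false_prod_bernoulli {E : Type*} [Fintype E] (p : ℝ) (S : Finset E) :
    ∑ g : E → Bool, (if ∀ e ∈ S, g e = false then ∏ e, (if g e then p else 1 - p) else 0)
      = (1 - p) ^ #S := by
  -- `F e` is the Bernoulli weight with the outcome `true` removed on `S`, so the indicator factors.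
  let F : E → Bool → ℝ := fun e b => if b then (if e ∈ S then 0 else p) else 1 - p
  have hterm : ∀ g : E → Bool,
      (if ∀ e ∈ S, g e = false then ∏ e, (if g e then p else 1 - p) else 0) = ∏ e, F e (g e) := by
    intro g
    split_ifs with h
    · refine prod_congr rfl fun e _ => ?_
      by_cases he : e ∈ S <;> simp [F, he, h]
    · push Not at h
      obtain ⟨e, he, hge⟩ := h
      exact (prod_eq_zero (mem_univ e) (by simp_all [F])).symm
  have hfactor : ∀ e, ∑ b, F e b = if e ∈ S then 1 - p else 1 := by
    intro e
    by_cases he : e ∈ S <;> simp [F, he]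
  rw [sum_congr rfl fun g _ => hterm g, ← Fintype.prod_sum F, prod_congr rfl fun e _ => hfactor e,
    prod_ite_mem, univ_inter, prod_const]

theorem sum_mul_card_filter {ι κ R : Type*} [CommSemiring R] (t : Finset ι) (s : Finset κ)
    (w : ι → R) (P : ι → κ → Prop) [∀ i, DecidablePred (P i)] :
    ∑ i ∈ t, w i * #(s.filter (P i)) = ∑ k ∈ s, ∑ i ∈ t, if P i k then w i else 0 := by
  simp only [card_filter, Nat.cast_sum, mul_sum, Nat.cast_ite, Nat.cast_one, Nat.cast_zero,
    mul_ite, mul_one, mul_zero]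
  exact sum_comm

theorem sum_filter_le_card_pow_le_two_mul {α : Type*} [Fintype α] {y : ℝ} (r : ℕ) (hy : 0 ≤ y)
    (hsmall : Fintype.card α * y ≤ 1 / 2) :
    ∑ B ∈ univ.filter (fun B : Finset α => r ≤ #B), y ^ #B ≤ 2 * (Fintype.card α * y) ^ r := by
  set n := Fintype.card α
  set x := (n : ℝ) * y
  have hx : 0 ≤ x := by positivity
  calc ∑ B ∈ univ.filter (fun B : Finset α => r ≤ #B), y ^ #B
      = ∑ k ∈ range (n + 1), n.choose k • (if r ≤ k then y ^ k else 0) := by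
        rw [sum_filter, ← powerset_univ,
          sum_powerset_apply_card (fun k => if r ≤ k then y ^ k else 0), card_univ]
    _ ≤ ∑ k ∈ range (n + 1), (if r ≤ k then x ^ k else 0) := by
        gcongr with k
        split_ifs
        · rw [nsmul_eq_mul, mul_pow]
          gcongr
          exact_mod_cast Nat.choose_le_pow n k
        · simp
    _ = ∑ k ∈ Ico r (n + 1), x ^ k := by
        rw [← sum_filter, range_eq_Ico, Ico_filter_le, Nat.zero_max]
    _ ≤ x ^ r / (1 - x) := geom_sum_Ico_le_of_lt_one hx (by linarith)
    _ ≤ 2 * x ^ r := by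
        rw [div_le_iff₀ (by linarith)]
        nlinarith [pow_nonneg hx r]

theorem bipProb_forall_not_edge {m n : ℕ} (p : ℝ) (A : Finset (Fin m)) (B : Finset (Fin n)) :
    bipProb m n p (fun g => ∀ a ∈ A, ∀ b ∈ B, ¬ g (a, b) = true) = (1 - p) ^ (#A * #B) := by
  rw [← card_product, ← sum_ite_forall_false_prod_bernoulli]
  unfold bipProb bipWeight
  congr! 2 with g
  simp only [Bool.not_eq_true, mem_product, Prod.forall, and_imp]
  exact ⟨fun h a b ha hb => h a ha b hb, fun h a ha b hb => h a b ha hb⟩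

theorem sum_bipWeight_mul_card_filter {m n : ℕ} {κ : Type*} (p : ℝ) (s : Finset κ)
    (P : (Fin m × Fin n → Bool) → κ → Prop) [∀ g, DecidablePred (P g)] :
    ∑ g, bipWeight m n p g * #(s.filter (P g)) = ∑ k ∈ s, bipProb m n p (fun g => P g k) := by
  rw [sum_mul_card_filter]
  unfold bipProb
  congr!

theorem stmt_4_general (m n ℓ r : ℕ) (p q : ℝ) (hq : q = 1 - p) (hq0 : 0 < q) (hq1 : q < 1)
    (hsmall : (n : ℝ) * q ^ ℓ ≤ 1/2) :
    (∑ g : Fin m × Fin n → Bool, bipWeight m n p g *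
        ((Finset.univ.filter (fun AB : Finset (Fin m) × Finset (Fin n) =>
            ℓ ≤ AB.1.card ∧ r ≤ AB.2.card ∧
              ∀ a ∈ AB.1, ∀ b ∈ AB.2, ¬ (g (a, b) = true))).card : ℝ))
      ≤ 2 ^ (m + 1) * ((n : ℝ) * q ^ ℓ) ^ r := by
  set sA := univ.filter (fun A : Finset (Fin m) => ℓ ≤ #A)
  set sB := univ.filter (fun B : Finset (Fin n) => r ≤ #B)
  have hpairs : ∀ g : Fin m × Fin n → Bool,
      univ.filter (fun AB : Finset (Fin m) × Finset (Fin n) => ℓ ≤ #AB.1 ∧ r ≤ #AB.2 ∧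
        ∀ a ∈ AB.1, ∀ b ∈ AB.2, ¬ (g (a, b) = true))
      = (sA ×ˢ sB).filter (fun AB => ∀ a ∈ AB.1, ∀ b ∈ AB.2, ¬ (g (a, b) = true)) := by
    intro g; ext AB; simp [sA, sB, and_assoc]
  have hsA : (#sA : ℝ) ≤ 2 ^ m := by
    exact_mod_cast (card_filter_le _ _).trans (by simp)
  have hsB : ∑ B ∈ sB, (q ^ ℓ) ^ #B ≤ 2 * ((n : ℝ) * q ^ ℓ) ^ r := by
    simpa using
      sum_filter_le_card_pow_le_two_mul (α := Fin n) r (by positivity) (by simpa using hsmall)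
  simp only [hpairs, sum_bipWeight_mul_card_filter, bipProb_forall_not_edge, ← hq]
  calc ∑ AB ∈ sA ×ˢ sB, q ^ (#AB.1 * #AB.2)
      = ∑ A ∈ sA, ∑ B ∈ sB, q ^ (#A * #B) := sum_product _ _ _
    _ ≤ ∑ A ∈ sA, ∑ B ∈ sB, (q ^ ℓ) ^ #B := by
        gcongr with A hA B
        rw [← pow_mul]
        exact pow_le_pow_of_le_one hq0.le hq1.le (Nat.mul_le_mul_right _ (mem_filter.1 hA).2)
    _ = #sA * ∑ B ∈ sB, (q ^ ℓ) ^ #B := by rw [sum_const, nsmul_eq_mul]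
    _ ≤ 2 ^ m * (2 * ((n : ℝ) * q ^ ℓ) ^ r) := by gcongr
    _ = 2 ^ (m + 1) * ((n : ℝ) * q ^ ℓ) ^ r := by ring

theorem stmt_4 (m n ℓ r : ℕ) (p q : ℝ) (hq : q = 1 - p) (hq0 : 0 < q) (hq1 : q < 1)
    (hℓ : ℓ ≤ m) (hr : r ≤ n) (hsmall : (n : ℝ) * q ^ ℓ ≤ 1/2) :
    (∑ g : Fin m × Fin n → Bool, bipWeight m n p g *
        ((Finset.univ.filter (fun AB : Finset (Fin m) × Finset (Fin n) =>
            ℓ ≤ AB.1.card ∧ r ≤ AB.2.card ∧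
              ∀ a ∈ AB.1, ∀ b ∈ AB.2, ¬ (g (a, b) = true))).card : ℝ))
      ≤ 2 ^ (m + 1) * ((n : ℝ) * q ^ ℓ) ^ r :=
  stmt_4_general m n ℓ r p q hq hq0 hq1 hsmall
end

section
/- Let G be a bipartite graph and let H be an induced subgraph of G obtained by restricting to L(G) ∪ R' for some R' ⊆ R(G). Then every maximal stable set S of H extends to a maximal stable set S' of G with S' ∩ V(H) = S, and this extension can be chosen injectively over the maximal stable sets of H. In particular, the number of maximal stable sets of G is at least the number of maximal stable sets of H. -/
/-!
If the vertices outside `W` are pairwise non-adjacent, a maximal stable set `S` of `G[W]` extends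
to a maximal stable set of `G` by adding every vertex outside `W` with no neighbour in `S`. The
added vertices meet `W` in nothing, so `S` is recovered by intersecting with `W`, which makes the
extension injective. In a bipartite graph the vertices outside `L ∪ R'` all lie in `R`, hence
are pairwise non-adjacent.
-/

open Finset
open scoped Classical

variable {V : Type*}

/-- `S` is a maximal stable set of the subgraph of `G` induced on the vertex set `W`. -/
def IsMaxStableOn [Fintype V] [DecidableEq V] (G : SimpleGraph V) (W S : Finset V) : Prop :=
  S ⊆ W ∧ (∀ u ∈ S, ∀ v ∈ S, ¬ G.Adj u v) ∧ ∀ v ∈ W, v ∉ S → ∃ u ∈ S, G.Adj v u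

/-- The maximal stable sets of the induced subgraph `G[W]`. -/
noncomputable def mstabOn [Fintype V] [DecidableEq V] (G : SimpleGraph V) (W : Finset V) :
    Finset (Finset V) :=
  Finset.univ.filter (fun S => IsMaxStableOn G W S)

noncomputable def extendStable [Fintype V] [DecidableEq V] (G : SimpleGraph V) (W S : Finset V) :
    Finset V :=
  S ∪ univ.filter (fun v => v ∉ W ∧ ∀ u ∈ S, ¬ G.Adj v u)

section

variable [Fintype V] [DecidableEq V] {G : SimpleGraph V} {W S : Finset V}

lemma mem_mstab : S ∈ mstab G ↔ IsMaxStable G S := by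
  simp [mstab]

lemma mem_mstabOn : S ∈ mstabOn G W ↔ IsMaxStableOn G W S := by
  simp [mstabOn]

lemma mem_extendStable {v : V} :
    v ∈ extendStable G W S ↔ v ∈ S ∨ (v ∉ W ∧ ∀ u ∈ S, ¬ G.Adj v u) := by
  simp [extendStable]

lemma extendStable_inter_of_subset (hSW : S ⊆ W) : extendStable G W S ∩ W = S := by
  ext v
  simp only [mem_inter, mem_extendStable]
  constructor
  · rintro ⟨hv | hv, hvW⟩
    · exact hv
    · exact absurd hvW hv.1
  · exact fun hv => ⟨Or.inl hv, hSW hv⟩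

lemma isMaxStable_extendStable (hW : ∀ u ∉ W, ∀ v ∉ W, ¬ G.Adj u v)
    (hS : IsMaxStableOn G W S) : IsMaxStable G (extendStable G W S) := by
  obtain ⟨-, hstab, hmax⟩ := hS
  refine ⟨fun u hu v hv huv => ?_, fun v hv => ?_⟩
  · rw [mem_extendStable] at hu hv
    rcases hu with hu | hu <;> rcases hv with hv | hv
    · exact hstab u hu v hv huv
    · exact hv.2 u hu huv.symm
    · exact hu.2 v hv huv
    · exact hW u hu.1 v hv.1 huv
  · simp only [mem_extendStable, not_or, not_and, not_forall, not_not, exists_prop] at hv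
    obtain ⟨hvS, hvext⟩ := hv
    obtain ⟨u, hu, hvu⟩ : ∃ u ∈ S, G.Adj v u := by
      by_cases hvW : v ∈ W
      · exact hmax v hvW hvS
      · exact hvext hvW
    exact ⟨u, mem_extendStable.2 (Or.inl hu), hvu⟩

lemma injOn_extendStable : Set.InjOn (extendStable G W) ↑(mstabOn G W) := by
  intro S₁ h₁ S₂ h₂ heq
  rw [mem_coe, mem_mstabOn] at h₁ h₂
  rw [← extendStable_inter_of_subset h₁.1, ← extendStable_inter_of_subset h₂.1, heq]

end

lemma IsBip.not_adj_of_notMem_union [DecidableEq V] {G : SimpleGraph V} {L R : Finset V}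
    (hbip : IsBip G L R) (R' : Finset V) {u v : V} (hu : u ∉ L ∪ R') (hv : v ∉ L ∪ R') :
    ¬ G.Adj u v := by
  obtain ⟨hdis, hcov, hadj⟩ := hbip
  have mem_R : ∀ x, x ∉ L ∪ R' → x ∈ R := fun x hx =>
    (mem_union.1 (hcov x)).resolve_left fun hxL => hx (mem_union_left _ hxL)
  intro huv
  rcases hadj huv with ⟨huL, -⟩ | ⟨-, hvL⟩
  · exact disjoint_left.1 hdis huL (mem_R u hu)
  · exact disjoint_left.1 hdis hvL (mem_R v hv)

theorem stmt_10_general [Fintype V] [DecidableEq V] (G : SimpleGraph V) (L R : Finset V)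
    (hbip : IsBip G L R) (R' : Finset V) :
    (∃ f : Finset V → Finset V,
        Set.InjOn f ↑(mstabOn G (L ∪ R')) ∧
        ∀ S ∈ mstabOn G (L ∪ R'), f S ∈ mstab G ∧ f S ∩ (L ∪ R') = S) ∧
      (mstabOn G (L ∪ R')).card ≤ (mstab G).card := by
  have extend_spec : ∀ S ∈ mstabOn G (L ∪ R'),
      extendStable G (L ∪ R') S ∈ mstab G ∧ extendStable G (L ∪ R') S ∩ (L ∪ R') = S := by
    intro S hS
    rw [mem_mstabOn] at hS
    exact ⟨mem_mstab.2 (isMaxStable_extendStable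
        (fun u hu v hv => hbip.not_adj_of_notMem_union R' hu hv) hS),
      extendStable_inter_of_subset hS.1⟩
  exact ⟨⟨_, injOn_extendStable, extend_spec⟩,
    card_le_card_of_injOn _ (fun S hS => (extend_spec S hS).1) injOn_extendStable⟩

theorem stmt_10 [Fintype V] [DecidableEq V] (G : SimpleGraph V) (L R : Finset V)
    (hbip : IsBip G L R) (R' : Finset V) (hR' : R' ⊆ R) :
    (∃ f : Finset V → Finset V,
        Set.InjOn f ↑(mstabOn G (L ∪ R')) ∧
        ∀ S ∈ mstabOn G (L ∪ R'), f S ∈ mstab G ∧ f S ∩ (L ∪ R') = S) ∧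
      (mstabOn G (L ∪ R')).card ≤ (mstab G).card :=
  stmt_10_general G L R hbip R'
end

section
/- Let 0 < q < 1 and α < 1/2, and set ν = (1/2 − α)·(⌊log_q(1/4)⌋ + 1 − log_q(1/4)). Then ν > 0, and for all sufficiently large m and all n ≤ q^{−αm}, the expected number of stable sets of G ∈ ℬ(m,n;p) with at least m/2 vertices in L(G) and at least ⌊log_q(1/4)⌋ + 1 vertices in R(G) is at most 2·n^{log_q(1/4)}·q^{νm}. -/
/-!
By linearity of expectation the expected count is `∑ q ^ (|A| * |B|)` over the admissible pairs
`(A, B)`. As `|A| ≥ m / 2`, each term is at most `(q ^ (m / 2)) ^ |B|`; there are at most `2 ^ m`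
sets `A` and at most `n ^ r` sets `B` of size `r`, so with `s = n q ^ (m / 2)` and
`k = ⌊λ⌋ + 1`, `λ = log_q (1 / 4)`, the sum is at most `2 ^ m ∑_{r ≥ k} s ^ r ≤ 2 ^ (m + 1) s ^ k`
once `s ≤ 1 / 2`. The hypothesis on `n` gives `s ≤ q ^ ((1 / 2 - α) m)`, which is small for large
`m`. Finally `q ^ λ = 1 / 4` makes `2 ^ m s ^ λ = n ^ λ`, and the remaining factor `s ^ (k - λ)`
is at most `q ^ ((1 / 2 - α) (k - λ) m)`.
-/

open Finset
open scoped Classical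

def IsStableEvent {m n : ℕ} (A : Finset (Fin m)) (B : Finset (Fin n))
    (g : Fin m × Fin n → Bool) : Prop :=
  ∀ a ∈ A, ∀ b ∈ B, ¬ g (a, b) = true

theorem bipProb_isStableEvent (m n : ℕ) (p : ℝ) (A : Finset (Fin m)) (B : Finset (Fin n)) :
    bipProb m n p (IsStableEvent A B) = (1 - p) ^ (#A * #B) := by
  set f : Fin m × Fin n → Bool → ℝ := fun e b =>
    (if e ∈ A ×ˢ B ∧ b then 0 else 1) * if b then p else 1 - p
  -- the weight of a stable outcome factors over the edges, hence so does the sum over outcomes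
  have h_weight (g : Fin m × Fin n → Bool) :
      (if IsStableEvent A B g then bipWeight m n p g else 0) = ∏ e, f e (g e) := by
    have : IsStableEvent A B g ↔ ∀ e ∈ univ, ¬(e ∈ A ×ˢ B ∧ g e = true) := by
      simp only [IsStableEvent, mem_univ, true_implies, Prod.forall, mem_product, not_and, and_imp]
      exact ⟨fun h a b ha hb => h a ha b hb, fun h a ha b hb => h a b ha hb⟩
    simp only [f, prod_mul_distrib, ← ite_not (_ ∧ _), prod_boole, ← this, bipWeight]
    split_ifs <;> simp
  have h_edge (e : Fin m × Fin n) : ∑ b, f e b = if e ∈ A ×ˢ B then 1 - p else 1 := by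
    simp only [f, Fintype.sum_bool]
    split_ifs <;> simp_all
  rw [bipProb, Fintype.sum_congr _ _ h_weight, ← Fintype.prod_sum, Fintype.prod_congr _ _ h_edge,
    prod_ite_mem, univ_inter, prod_const, card_product]

theorem sum_bipWeight_mul_card_isStableEvent (m n : ℕ) (p : ℝ)
    (P : Finset (Fin m) × Finset (Fin n) → Prop) :
    ∑ g, bipWeight m n p g * (#{AB | P AB ∧ IsStableEvent AB.1 AB.2 g} : ℝ)
      = ∑ AB with P AB, (1 - p) ^ (#AB.1 * #AB.2) := by
  simp_rw [natCast_card_filter, mul_sum, mul_boole]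
  rw [sum_comm, sum_filter]
  refine sum_congr rfl fun AB _ => ?_
  by_cases hP : P AB
  · simp only [hP, true_and, if_true, ← bipProb_isStableEvent, bipProb]
  · simp [hP]

theorem sum_pow_card_le_of_card_mul_le_half {α : Type*} [Fintype α] {x : ℝ} (hx : 0 ≤ x)
    (hsmall : Fintype.card α * x ≤ 1 / 2) (k : ℕ) :
    ∑ B : Finset α with k ≤ #B, x ^ #B ≤ 2 * (Fintype.card α * x) ^ k := by
  set N := Fintype.card α
  have h_tail : {r ∈ range (N + 1) | k ≤ r} = Ico k (N + 1) := by ext r; simp; omega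
  calc ∑ B : Finset α with k ≤ #B, x ^ #B
      = ∑ r ∈ range (N + 1), N.choose r • if k ≤ r then x ^ r else 0 := by
        rw [sum_filter, ← powerset_univ]
        exact sum_powerset_apply_card fun r => if k ≤ r then x ^ r else 0
    _ ≤ ∑ r ∈ range (N + 1), if k ≤ r then (N * x) ^ r else 0 := by
        gcongr with r
        split_ifs
        · rw [nsmul_eq_mul, mul_pow]
          gcongr
          exact_mod_cast N.choose_le_pow r
        · simp
    _ = ∑ r ∈ Ico k (N + 1), (N * x) ^ r := by rw [← sum_filter, h_tail]
    _ ≤ (N * x) ^ k / (1 - N * x) := geom_sum_Ico_le_of_lt_one (by positivity) (by linarith)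
    _ ≤ 2 * (N * x) ^ k := by
        rw [div_le_iff₀ (by linarith)]
        nlinarith [pow_nonneg (mul_nonneg N.cast_nonneg hx) k]

theorem pow_card_mul_card_le {α β : Type*} {q t : ℝ} (hq0 : 0 < q) (hq1 : q ≤ 1)
    {A : Finset α} (hA : t ≤ #A) (B : Finset β) : q ^ (#A * #B) ≤ (q ^ t) ^ #B := by
  rw [pow_mul, ← Real.rpow_natCast q #A]
  exact pow_le_pow_left₀ (by positivity) (Real.rpow_le_rpow_of_exponent_ge hq0 hq1 hA) _

theorem sum_pow_card_mul_card_le {α β : Type*} [Fintype α] [Fintype β] {q t : ℝ}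
    (hq0 : 0 < q) (hq1 : q ≤ 1) (hsmall : Fintype.card β * q ^ t ≤ 1 / 2) (k : ℕ) :
    ∑ AB : Finset α × Finset β with t ≤ #AB.1 ∧ k ≤ #AB.2, q ^ (#AB.1 * #AB.2)
      ≤ 2 ^ Fintype.card α * (2 * (Fintype.card β * q ^ t) ^ k) := by
  rw [← univ_product_univ, filter_product (fun A => t ≤ #A) (fun B => k ≤ #B), sum_product]
  calc ∑ A with t ≤ #A, ∑ B with k ≤ #B, q ^ (#A * #B)
      ≤ ∑ A with t ≤ #A, ∑ B : Finset β with k ≤ #B, (q ^ t) ^ #B := by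
        gcongr with A hA B
        exact pow_card_mul_card_le hq0 hq1 (mem_filter.1 hA).2 B
    _ ≤ 2 ^ Fintype.card α * (2 * (Fintype.card β * q ^ t) ^ k) := by
        rw [sum_const, nsmul_eq_mul]
        gcongr
        · exact_mod_cast (card_filter_le _ _).trans_eq (by simp)
        · exact sum_pow_card_le_of_card_mul_le_half (by positivity) hsmall k

theorem rpow_half_rpow_eq_half_pow {q L : ℝ} (hq0 : 0 < q) (hqL : q ^ L = 1 / 4) (m : ℕ) :
    (q ^ ((m : ℝ) / 2)) ^ L = (1 / 2) ^ m := by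
  rw [← Real.rpow_mul hq0.le, mul_comm, Real.rpow_mul hq0.le, hqL,
    show (1 / 4 : ℝ) = (1 / 2) ^ (2 : ℝ) by norm_num, ← Real.rpow_mul (by norm_num),
    mul_div_cancel₀ _ two_ne_zero, Real.rpow_natCast]

theorem two_pow_mul_pow_le {q L c y : ℝ} {m k : ℕ} (hq0 : 0 < q) (hqL : q ^ L = 1 / 4)
    (hLk : L ≤ k) (hk : k ≠ 0) (hy : 0 ≤ y) (hs : y * q ^ ((m : ℝ) / 2) ≤ q ^ (c * m)) :
    2 ^ m * (2 * (y * q ^ ((m : ℝ) / 2)) ^ k) ≤ 2 * y ^ L * q ^ (c * (k - L) * m) := by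
  set s := y * q ^ ((m : ℝ) / 2)
  have hs0 : 0 ≤ s := by positivity
  have h_split : s ^ k = s ^ L * s ^ ((k : ℝ) - L) := by
    rw [← Real.rpow_add' hs0 (by simpa using hk), add_sub_cancel, Real.rpow_natCast]
  have h_head : s ^ L = y ^ L * (1 / 2) ^ m := by
    rw [Real.mul_rpow hy (by positivity), rpow_half_rpow_eq_half_pow hq0 hqL]
  have h_tail : s ^ ((k : ℝ) - L) ≤ q ^ (c * (k - L) * m) := by
    refine (Real.rpow_le_rpow hs0 hs (sub_nonneg.2 hLk)).trans_eq ?_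
    rw [← Real.rpow_mul hq0.le]
    ring_nf
  have h_cancel : (2 : ℝ) ^ m * (1 / 2) ^ m = 1 := by rw [← mul_pow]; norm_num
  calc 2 ^ m * (2 * s ^ k) = 2 * y ^ L * s ^ ((k : ℝ) - L) := by
        rw [h_split, h_head]; linear_combination (2 * y ^ L * s ^ ((k : ℝ) - L)) * h_cancel
    _ ≤ 2 * y ^ L * q ^ (c * (k - L) * m) := by gcongr

theorem exists_rpow_mul_le_half {q c : ℝ} (hq0 : 0 < q) (hq1 : q < 1) (hc : 0 < c) :
    ∃ M : ℕ, ∀ m ≥ M, q ^ (c * m) ≤ 1 / 2 := by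
  have hqc : q ^ c < 1 := Real.rpow_lt_one hq0.le hq1 hc
  obtain ⟨M, hM⟩ := exists_pow_lt_of_lt_one one_half_pos hqc
  refine ⟨M, fun m hm => ?_⟩
  rw [Real.rpow_mul hq0.le, Real.rpow_natCast]
  exact (pow_le_pow_of_le_one (by positivity) hqc.le hm).trans hM.le

theorem stmt_16 (p q α : ℝ) (hq : q = 1 - p) (hq0 : 0 < q) (hq1 : q < 1) (hα : α < 1/2) :
    0 < (1/2 - α) * ((⌊Real.log (1/4) / Real.log q⌋ : ℝ) + 1 - Real.log (1/4) / Real.log q) ∧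
    ∃ M : ℕ, ∀ m : ℕ, M ≤ m → ∀ n : ℕ, (n : ℝ) ≤ q ^ (-(α * (m : ℝ))) →
      (∑ g : Fin m × Fin n → Bool, bipWeight m n p g *
          ((Finset.univ.filter (fun AB : Finset (Fin m) × Finset (Fin n) =>
              (m : ℝ) / 2 ≤ (AB.1.card : ℝ) ∧
              ⌊Real.log (1/4) / Real.log q⌋ + 1 ≤ (AB.2.card : ℤ) ∧
              ∀ a ∈ AB.1, ∀ b ∈ AB.2, ¬ (g (a, b) = true))).card : ℝ))
        ≤ 2 * (n : ℝ) ^ (Real.log (1/4) / Real.log q) *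
            q ^ ((1/2 - α) *
              ((⌊Real.log (1/4) / Real.log q⌋ : ℝ) + 1 - Real.log (1/4) / Real.log q)
              * (m : ℝ)) := by
  set L := Real.log (1 / 4) / Real.log q
  have hlogq : Real.log q < 0 := Real.log_neg hq0 hq1
  have hL : 0 < L := div_pos_of_neg_of_neg (Real.log_neg (by norm_num) (by norm_num)) hlogq
  have hqL : q ^ L = 1 / 4 := by
    rw [Real.rpow_def_of_pos hq0, mul_div_cancel₀ _ hlogq.ne, Real.exp_log (by norm_num)]
  set k := ⌊L⌋₊ + 1
  have hkZ : ⌊L⌋ + 1 = (k : ℤ) := by push_cast [k, Int.natCast_floor_eq_floor hL.le]; rfl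
  have hkR : (⌊L⌋ : ℝ) + 1 = k := by exact_mod_cast hkZ
  have hLk : L < k := hkR ▸ Int.lt_floor_add_one L
  refine ⟨mul_pos (sub_pos.2 hα) (by linarith), ?_⟩
  obtain ⟨M, hM⟩ := exists_rpow_mul_le_half hq0 hq1 (sub_pos.2 hα)
  refine ⟨M, fun m hm n hn => ?_⟩
  have hs : n * q ^ ((m : ℝ) / 2) ≤ q ^ ((1 / 2 - α) * m) := by
    calc n * q ^ ((m : ℝ) / 2) ≤ q ^ (-(α * m)) * q ^ ((m : ℝ) / 2) := by gcongr
      _ = q ^ ((1 / 2 - α) * m) := by rw [← Real.rpow_add hq0]; ring_nf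
  have h_expect := sum_bipWeight_mul_card_isStableEvent m n p
    fun AB => (m : ℝ) / 2 ≤ #AB.1 ∧ ⌊L⌋ + 1 ≤ (#AB.2 : ℤ)
  simp only [IsStableEvent, and_assoc, hkZ, Nat.cast_le, ← hq] at h_expect
  simp only [hkZ, Nat.cast_le]
  rw [h_expect, hkR]
  calc _ ≤ 2 ^ m * (2 * (n * q ^ ((m : ℝ) / 2)) ^ k) := by
        simpa using sum_pow_card_mul_card_le (α := Fin m) (β := Fin n) hq0 hq1.le
          (by simpa using hs.trans (hM m hm)) k
    _ ≤ _ := two_pow_mul_pow_le hq0 hqL hLk.le (by simp [k]) n.cast_nonneg hs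
end
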